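/- Let k be an algebraically closed field, B the upper triangular Borel of SL₄(k), and 𝔫 the strictly upper triangular 4×4 matrices with coordinates (u,v,w,x,y,z) = (entry(1,2), entry(2,3), entry(3,4), entry(1,3), entry(2,4), entry(1,4)). The locally closed set S = {v = 0, x,u,w arbitrary with u ≠ 0, w ≠ 0} decomposes into exactly two B-orbits: the orbit of e₁₂ + e₃₄ consists of those points with w·x + u·y = 0, and the orbit of e₁₂ + e₃₄ + e₂₄ consists of those with w·x + u·y ≠ 0. -/

import Mathlib

open Matrix

def borelSubgroup (n : ℕ) (k : Type*) [Field k] : Set (Matrix (Fin n) (Fin n) k) :=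
  {b | b.det = 1 ∧ ∀ i j : Fin n, j < i → b i j = 0}

def borelOrbit (n : ℕ) (k : Type*) [Field k] (x : Matrix (Fin n) (Fin n) k) :
    Set (Matrix (Fin n) (Fin n) k) :=
  {m | ∃ b ∈ borelSubgroup n k, b * x * b⁻¹ = m}

/-!
Conjugating a strictly upper triangular matrix by an upper triangular `b` keeps it strictly
upper triangular and multiplies each entry `m i (i+1)` next to the diagonal by `b i i / b (i+1) (i+1)`.
So `B` preserves the slice `S = {v = 0, u ≠ 0, w ≠ 0}`. On `S` the square `m²` is
`(w x + u y) e₁₄`, so conjugation multiplies `w x + u y` by the nonzero factor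
`b₁₁ / b₄₄`, and whether it vanishes is a `B`-invariant. Conversely, every point of `S`
is reached from `e₁₂ + e₃₄ + t e₂₄` by an explicit upper triangular `b`. To get `det b = 1`
we take a square root (`t = 0`) or a fourth root (`t ≠ 0`).
-/

namespace Matrix

variable {ι R : Type*} [Fintype ι] [LinearOrder ι] [NonUnitalNonAssocSemiring R]
  {b X c : Matrix ι ι R}

def IsStrictlyUpperTriangular (M : Matrix ι ι R) : Prop :=
  ∀ ⦃i j⦄, j ≤ i → M i j = 0

lemma IsUpperTriangular.mul_isStrictlyUpperTriangular (hb : b.IsUpperTriangular)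
    (hX : X.IsStrictlyUpperTriangular) : (b * X).IsStrictlyUpperTriangular :=
  fun i j hji => Finset.sum_eq_zero fun k _ => by
    rcases lt_or_ge k i with hki | hik
    · exact mul_eq_zero_of_left (hb hki) _
    · exact mul_eq_zero_of_right _ (hX (hji.trans hik))

lemma IsStrictlyUpperTriangular.mul_isUpperTriangular (hX : X.IsStrictlyUpperTriangular)
    (hc : c.IsUpperTriangular) : (X * c).IsStrictlyUpperTriangular :=
  fun i j hji => Finset.sum_eq_zero fun k _ => by
    rcases lt_or_ge j k with hjk | hkj
    · exact mul_eq_zero_of_right _ (hc hjk)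
    · exact mul_eq_zero_of_left (hX (hkj.trans hji)) _

lemma IsUpperTriangular.mul_apply_of_covBy (hb : b.IsUpperTriangular)
    (hX : X.IsStrictlyUpperTriangular) {i j : ι} (hij : i ⋖ j) :
    (b * X) i j = b i i * X i j :=
  Finset.sum_eq_single i
    (fun k _ hki => by
      rcases hki.lt_or_gt with hki | hik
      · exact mul_eq_zero_of_left (hb hki) _
      · exact mul_eq_zero_of_right _ (hX (hij.ge_of_gt hik)))
    (by simp)

lemma IsStrictlyUpperTriangular.mul_apply_of_covBy (hX : X.IsStrictlyUpperTriangular)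
    (hc : c.IsUpperTriangular) {i j : ι} (hij : i ⋖ j) :
    (X * c) i j = X i j * c j j :=
  Finset.sum_eq_single j
    (fun k _ hkj => by
      rcases hkj.lt_or_gt with hkj | hjk
      · exact mul_eq_zero_of_left (hX (hij.le_of_lt hkj)) _
      · exact mul_eq_zero_of_right _ (hc hjk))
    (by simp)

lemma IsUpperTriangular.mul_mul_apply_of_covBy (hb : b.IsUpperTriangular)
    (hX : X.IsStrictlyUpperTriangular) (hc : c.IsUpperTriangular) {i j : ι} (hij : i ⋖ j) :
    (b * X * c) i j = b i i * X i j * c j j := by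
  rw [(hb.mul_isStrictlyUpperTriangular hX).mul_apply_of_covBy hc hij,
    hb.mul_apply_of_covBy hX hij]

end Matrix

section Borel

variable {n : ℕ} {k : Type*} [Field k] {b : Matrix (Fin n) (Fin n) k}

lemma isUpperTriangular_of_mem_borelSubgroup (hb : b ∈ borelSubgroup n k) :
    b.IsUpperTriangular :=
  fun i j h => hb.2 i j h

lemma diag_ne_zero_of_mem_borelSubgroup (hb : b ∈ borelSubgroup n k) (i : Fin n) :
    b i i ≠ 0 := by
  have hprod : ∏ i, b i i ≠ 0 := by
    rw [← det_of_isUpperTriangular (isUpperTriangular_of_mem_borelSubgroup hb), hb.1]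
    exact one_ne_zero
  exact Finset.prod_ne_zero_iff.mp hprod i (Finset.mem_univ i)

lemma inv_mem_borelSubgroup (hb : b ∈ borelSubgroup n k) : b⁻¹ ∈ borelSubgroup n k := by
  have : Invertible b := b.invertibleOfIsUnitDet (by simp [hb.1])
  exact ⟨by simp [det_nonsing_inv, hb.1], fun i j h =>
    blockTriangular_inv_of_blockTriangular (isUpperTriangular_of_mem_borelSubgroup hb) h⟩

lemma mem_borelOrbit_iff_exists_mul_eq {X m : Matrix (Fin n) (Fin n) k} :
    m ∈ borelOrbit n k X ↔ ∃ b ∈ borelSubgroup n k, b * X = m * b := by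
  refine exists_congr fun b => and_congr_right fun hb => ?_
  have : Invertible b := b.invertibleOfIsUnitDet (by simp [hb.1])
  exact mul_inv_eq_iff_eq_mul_of_invertible b (b * X) m

end Borel

section Slice

variable {k : Type*} [Field k]

/-- The point of `𝔫` with coordinates `(u, v, w, x, y, z)` and `v = 0`; indices are 0-based,
so `u, w, x, y, z` sit at `(0,1), (2,3), (0,2), (1,3), (0,3)`. -/
def slicePoint (u w x y z : k) : Matrix (Fin 4) (Fin 4) k :=
  !![0, u, x, z; 0, 0, 0, y; 0, 0, 0, w; 0, 0, 0, 0]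

lemma smul_single_add_eq_slicePoint (u w x y z : k) :
    u • single (0 : Fin 4) 1 (1 : k) + w • single (2 : Fin 4) 3 (1 : k) +
        x • single (0 : Fin 4) 2 (1 : k) + y • single (1 : Fin 4) 3 (1 : k) +
        z • single (0 : Fin 4) 3 (1 : k) =
      slicePoint u w x y z := by
  ext i j
  fin_cases i <;> fin_cases j <;> simp [slicePoint]

lemma slicePoint_mul_self (u w x y z : k) :
    slicePoint u w x y z * slicePoint u w x y z = single 0 3 (w * x + u * y) := by
  ext i j
  fin_cases i <;> fin_cases j <;>
    simp [slicePoint, mul_apply, Fin.sum_univ_four, add_comm, mul_comm]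

lemma isStrictlyUpperTriangular_slicePoint (u w x y z : k) :
    (slicePoint u w x y z).IsStrictlyUpperTriangular := by
  intro i j hji
  fin_cases i <;> fin_cases j <;> first | rfl | exact absurd hji (by decide)

lemma eq_slicePoint_of_isStrictlyUpperTriangular {m : Matrix (Fin 4) (Fin 4) k}
    (hm : m.IsStrictlyUpperTriangular) (h12 : m 1 2 = 0) :
    m = slicePoint (m 0 1) (m 2 3) (m 0 2) (m 1 3) (m 0 3) := by
  ext i j
  fin_cases i <;> fin_cases j <;> simp [slicePoint, h12] <;> exact hm (by decide)

lemma eq_slicePoint_of_borel_conj {b m : Matrix (Fin 4) (Fin 4) k}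
    (hb : b ∈ borelSubgroup 4 k) {u w x y z : k} (hu : u ≠ 0) (hw : w ≠ 0)
    (hm : b * slicePoint u w x y z * b⁻¹ = m) :
    m 0 1 ≠ 0 ∧ m 2 3 ≠ 0 ∧
      m 2 3 * m 0 2 + m 0 1 * m 1 3 = b 0 0 * (w * x + u * y) * b⁻¹ 3 3 ∧
      m = slicePoint (m 0 1) (m 2 3) (m 0 2) (m 1 3) (m 0 3) := by
  have hc := inv_mem_borelSubgroup hb
  have hb' := isUpperTriangular_of_mem_borelSubgroup hb
  have hc' := isUpperTriangular_of_mem_borelSubgroup hc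
  have hN := isStrictlyUpperTriangular_slicePoint u w x y z
  have hm_entry {i j : Fin 4} (hij : i ⋖ j) :
      m i j = b i i * slicePoint u w x y z i j * b⁻¹ j j :=
    hm ▸ hb'.mul_mul_apply_of_covBy hN hc' hij
  have h01 := hm_entry (i := 0) (j := 1) (by simp [Nat.covBy_iff_add_one_eq])
  have h12 := hm_entry (i := 1) (j := 2) (by simp [Nat.covBy_iff_add_one_eq])
  have h23 := hm_entry (i := 2) (j := 3) (by simp [Nat.covBy_iff_add_one_eq])
  simp only [slicePoint, of_apply, cons_val', cons_val_zero, cons_val_one, empty_val',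
    cons_val_fin_one, cons_val, mul_zero, zero_mul] at h01 h12 h23
  have hm_eq := eq_slicePoint_of_isStrictlyUpperTriangular
    (hm ▸ (hb'.mul_isStrictlyUpperTriangular hN).mul_isUpperTriangular hc') h12
  have hsq : m * m = b * (slicePoint u w x y z * slicePoint u w x y z) * b⁻¹ := by
    rw [← hm]
    simp only [Matrix.mul_assoc]
    rw [← Matrix.mul_assoc b⁻¹ b, nonsing_inv_mul b (by simp [hb.1]), Matrix.one_mul]
  refine ⟨?_, ?_, ?_, hm_eq⟩
  · rw [h01]
    exact mul_ne_zero (mul_ne_zero (diag_ne_zero_of_mem_borelSubgroup hb 0) hu)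
      (diag_ne_zero_of_mem_borelSubgroup hc 1)
  · rw [h23]
    exact mul_ne_zero (mul_ne_zero (diag_ne_zero_of_mem_borelSubgroup hb 2) hw)
      (diag_ne_zero_of_mem_borelSubgroup hc 3)
  · rw [hm_eq, slicePoint_mul_self, slicePoint_mul_self] at hsq
    simpa [mul_apply, single_apply, Fin.sum_univ_four] using congrFun (congrFun hsq 0) 3

lemma slicePoint_mem_borelOrbit {t u w x y z γ φ : k} (hu : u ≠ 0)
    (hγ : t * γ * u = φ * (w * x + u * y)) (hdet : u * w * γ ^ 2 * φ ^ 2 = 1) :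
    slicePoint u w x y z ∈ borelOrbit 4 k (slicePoint 1 1 0 t 0) := by
  -- solves `b * slicePoint 1 1 0 t 0 = slicePoint u w x y z * b` entrywise; the (2,4) entry
  -- is `hγ`, and `det b = 1` is `hdet`
  let b : Matrix (Fin 4) (Fin 4) k :=
    !![u * γ, 0, z * φ, 0; 0, γ, -(x * w * φ) / u, 0; 0, 0, w * φ, 0; 0, 0, 0, φ]
  have hb : b.IsUpperTriangular := by
    intro i j hji
    fin_cases i <;> fin_cases j <;> first | rfl | exact absurd hji (by decide)
  refine mem_borelOrbit_iff_exists_mul_eq.mpr ⟨b, ⟨?_, fun i j h => hb h⟩, ?_⟩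
  · rw [det_of_isUpperTriangular hb, Fin.prod_univ_four]
    show u * γ * γ * (w * φ) * φ = 1
    linear_combination hdet
  · ext i j
    fin_cases i <;> fin_cases j <;> simp [b, slicePoint, mul_apply, Fin.sum_univ_four]
    · field_simp
      ring
    · field_simp
      linear_combination hγ

lemma exists_witness_scalars [IsAlgClosed k] {t u w q : k} (hu : u ≠ 0) (hw : w ≠ 0)
    (hq : q = 0 ↔ t = 0) : ∃ γ φ : k, t * γ * u = φ * q ∧ u * w * γ ^ 2 * φ ^ 2 = 1 := by
  by_cases ht : t = 0
  · obtain ⟨γ, hγ⟩ := IsAlgClosed.exists_pow_nat_eq (u * w)⁻¹ two_pos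
    refine ⟨γ, 1, by simp [ht, hq.mpr ht], ?_⟩
    rw [mul_assoc (u * w), hγ]
    field_simp
  · have hq0 : q ≠ 0 := fun h => ht (hq.mp h)
    obtain ⟨φ, hφ⟩ := IsAlgClosed.exists_pow_nat_eq (t ^ 2 * u / (w * q ^ 2)) four_pos
    have hφ' : φ ^ 4 * (w * q ^ 2) = t ^ 2 * u := by rw [hφ]; field_simp
    refine ⟨φ * q / (t * u), φ, by field_simp, ?_⟩
    field_simp
    linear_combination hφ'

lemma borelOrbit_slicePoint [IsAlgClosed k] (t : k) :
    borelOrbit 4 k (slicePoint 1 1 0 t 0) =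
      {m | ∃ u w x y z : k, u ≠ 0 ∧ w ≠ 0 ∧ (w * x + u * y = 0 ↔ t = 0) ∧
        m = slicePoint u w x y z} := by
  ext m
  constructor
  · rintro ⟨b, hb, hm⟩
    obtain ⟨hu, hw, hq, hm_eq⟩ := eq_slicePoint_of_borel_conj hb one_ne_zero one_ne_zero hm
    refine ⟨_, _, _, _, _, hu, hw, ?_, hm_eq⟩
    simp [hq, diag_ne_zero_of_mem_borelSubgroup hb,
      diag_ne_zero_of_mem_borelSubgroup (inv_mem_borelSubgroup hb)]
  · rintro ⟨u, w, x, y, z, hu, hw, hq, rfl⟩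
    obtain ⟨γ, φ, hγ, hdet⟩ := exists_witness_scalars hu hw hq
    exact slicePoint_mem_borelOrbit hu hγ hdet

end Slice

/-- In root notation for `sl₄`: `x₁ = e₁₂`, `x₃ = e₃₄`, `x₁₂ = e₁₃`,
`x₂₃ = e₂₄`, `x₁₃ = e₁₄`. -/
theorem sl4_locally_closed_two_orbits (k : Type*) [Field k] [IsAlgClosed k] :
    borelOrbit 4 k
        (Matrix.single (0 : Fin 4) 1 (1 : k) +
          Matrix.single (2 : Fin 4) 3 (1 : k)) =
      {m | ∃ u w x y z : k, u ≠ 0 ∧ w ≠ 0 ∧ w * x + u * y = 0 ∧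
        m = u • Matrix.single (0 : Fin 4) 1 (1 : k) +
            w • Matrix.single (2 : Fin 4) 3 (1 : k) +
            x • Matrix.single (0 : Fin 4) 2 (1 : k) +
            y • Matrix.single (1 : Fin 4) 3 (1 : k) +
            z • Matrix.single (0 : Fin 4) 3 (1 : k)} ∧
    borelOrbit 4 k
        (Matrix.single (0 : Fin 4) 1 (1 : k) +
          Matrix.single (2 : Fin 4) 3 (1 : k) +
          Matrix.single (1 : Fin 4) 3 (1 : k)) =
      {m | ∃ u w x y z : k, u ≠ 0 ∧ w ≠ 0 ∧ w * x + u * y ≠ 0 ∧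
        m = u • Matrix.single (0 : Fin 4) 1 (1 : k) +
            w • Matrix.single (2 : Fin 4) 3 (1 : k) +
            x • Matrix.single (0 : Fin 4) 2 (1 : k) +
            y • Matrix.single (1 : Fin 4) 3 (1 : k) +
            z • Matrix.single (0 : Fin 4) 3 (1 : k)} := by
  have h₀ := smul_single_add_eq_slicePoint (1 : k) 1 0 0 0
  have h₁ := smul_single_add_eq_slicePoint (1 : k) 1 0 1 0
  simp only [one_smul, zero_smul, add_zero] at h₀ h₁
  rw [h₁, h₀, borelOrbit_slicePoint, borelOrbit_slicePoint]
  simp only [smul_single_add_eq_slicePoint, iff_true, one_ne_zero, iff_false, and_self]
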